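/- arXiv:2503.00181 — 4 statements merged into one kernel-verified Lean document; each statement's English description precedes it below -/
import Mathlib

section
/- Let Δ be an m-invariant set (Δ + m ⊆ Δ) that is bounded below and co-bounded. Then the set of m-generators Δ \ (Δ + m) contains exactly one element from each residue class modulo m; in particular it has exactly m elements. -/
/-!
Invariance makes `Δ ∩ (r + mℤ)` an up-ray `a + mℕ`; its least element `a`, which exists because `Δ` is
bounded below and the class meets `Δ` because `Δ` is co-bounded, is the only element `b` of the class
with `b - m ∉ Δ`. The map `b ↦ b % m` is then a bijection from the generators onto `[0, m)`.
-/

/-- The shift of a set of integers: `Δ + k`. -/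
def shiftSet (Δ : Set ℤ) (k : ℤ) : Set ℤ := (· + k) '' Δ

/-- `Δ` is `k`-invariant if `Δ + k ⊆ Δ`. -/
def Invariant (k : ℤ) (Δ : Set ℤ) : Prop := shiftSet Δ k ⊆ Δ

/-- `Δ` is bounded (has a minimum element). -/
def HasMin (Δ : Set ℤ) : Prop := ∃ a ∈ Δ, ∀ x ∈ Δ, a ≤ x

/-- `Δ` is co-bounded: contains all sufficiently large integers. -/
def CoBounded (Δ : Set ℤ) : Prop := ∃ N : ℤ, ∀ x : ℤ, N ≤ x → x ∈ Δ

/-- The `k`-generators of `Δ`: elements `a ∈ Δ` with `a - k ∉ Δ`, i.e. `Δ \ (Δ + k)`. -/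
def gens (k : ℤ) (Δ : Set ℤ) : Set ℤ := Δ \ shiftSet Δ k

/-- The `(j+1)`-st smallest element of a set of integers. -/
noncomputable def nthSmallest : ℕ → Set ℤ → ℤ
  | 0, S => sInf S
  | j+1, S => nthSmallest j (S \ {sInf S})

/-- The letter `j ∈ [m]` acts on an `m`-invariant set by removing its `(j+1)`-st
smallest `m`-generator. -/
noncomputable def letterAct (m : ℤ) (j : ℕ) (Δ : Set ℤ) : Set ℤ :=
  Δ \ {nthSmallest j (gens m Δ)}

/-- `steps m p Δ i = p_{i-1} ⋯ p_1 p_0 ⋅ Δ`: the word acts one letter at a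
time, the letter `p 0` (rightmost) acting first. -/
noncomputable def steps (m : ℤ) (p : ℕ → ℕ) (Δ : Set ℤ) : ℕ → Set ℤ
  | 0 => Δ
  | i+1 => letterAct m (p i) (steps m p Δ i)

variable {m : ℤ} {Δ : Set ℤ}

theorem mem_gens_iff {a : ℤ} : a ∈ gens m Δ ↔ a ∈ Δ ∧ a - m ∉ Δ := by
  simp [gens, shiftSet, sub_eq_add_neg]

theorem Invariant.add_mul_mem (hI : Invariant m Δ) {a : ℤ} (ha : a ∈ Δ) (k : ℕ) :
    a + k * m ∈ Δ := by
  induction k with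
  | zero => simpa using ha
  | succ k ih =>
    have hstep : a + k * m + m ∈ Δ := hI ⟨_, ih, rfl⟩
    convert hstep using 1
    push_cast
    ring

theorem Invariant.mem_of_le_of_modEq (hm : 0 < m) (hI : Invariant m Δ) {a b : ℤ} (ha : a ∈ Δ)
    (hab : a ≤ b) (hmod : a ≡ b [ZMOD m]) : b ∈ Δ := by
  obtain ⟨k, hk⟩ := Int.modEq_iff_dvd.mp hmod
  have hk0 : 0 ≤ k := by nlinarith
  have hb : b = a + k.toNat * m := by rw [Int.toNat_of_nonneg hk0]; linarith
  exact hb ▸ hI.add_mul_mem ha k.toNat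

theorem Invariant.eq_of_mem_gens_of_modEq (hm : 0 < m) (hI : Invariant m Δ) {a b : ℤ}
    (ha : a ∈ gens m Δ) (hb : b ∈ gens m Δ) (hmod : a ≡ b [ZMOD m]) : a = b := by
  wlog hab : a ≤ b generalizing a b
  · exact (this hb ha hmod.symm (le_of_not_ge hab)).symm
  by_contra hne
  have hm_le : m ≤ b - a :=
    Int.le_of_dvd (by omega) (Int.modEq_iff_dvd.mp hmod)
  have hmod' : a ≡ b - m [ZMOD m] := Int.modEq_sub_modulus_iff.mpr hmod
  exact (mem_gens_iff.mp hb).2 (hI.mem_of_le_of_modEq hm (mem_gens_iff.mp ha).1 (by omega) hmod')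

theorem exists_mem_gens_modEq (hm : 0 < m) (hb : BddBelow Δ) (hc : CoBounded Δ) (r : ℤ) :
    ∃ a ∈ gens m Δ, a ≡ r [ZMOD m] := by
  obtain ⟨N, hN⟩ := hc
  have hinh : ∃ z, z ∈ Δ ∧ z ≡ r [ZMOD m] := by
    refine ⟨r + (N - r).toNat * m, hN _ ?_, by simp [Int.ModEq]⟩
    nlinarith [Int.self_le_toNat (N - r), Int.natCast_nonneg (N - r).toNat]
  obtain ⟨a, ⟨haΔ, har⟩, hleast⟩ :=
    Int.exists_least_of_bdd (hb.imp fun c hc z hz => hc hz.1) hinh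
  refine ⟨a, mem_gens_iff.mpr ⟨haΔ, fun hsub => ?_⟩, har⟩
  have := hleast (a - m) ⟨hsub, (Int.modEq_sub_modulus_iff.mpr har.symm).symm⟩
  omega

theorem exists_finset_of_existsUnique_emod (hm : 0 < m) {S : Set ℤ}
    (hS : ∀ r : ℤ, ∃! a : ℤ, a ∈ S ∧ a % m = r % m) :
    ∃ s : Finset ℤ, (↑s : Set ℤ) = S ∧ s.card = m.toNat := by
  have hbij : Set.BijOn (· % m) S (Set.Ico 0 m) := by
    refine ⟨fun a _ => ⟨Int.emod_nonneg a hm.ne', Int.emod_lt_of_pos a hm⟩, ?_, ?_⟩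
    · intro a ha b hb hab
      exact (hS a).unique ⟨ha, rfl⟩ ⟨hb, hab.symm⟩
    · intro r ⟨hr0, hrm⟩
      obtain ⟨a, ⟨ha, har⟩, -⟩ := hS r
      exact ⟨a, ha, har.trans (Int.emod_eq_of_lt hr0 hrm)⟩
  have hfin : S.Finite :=
    Set.Finite.of_finite_image (hbij.image_eq ▸ Set.finite_Ico 0 m) hbij.injOn
  refine ⟨hfin.toFinset, hfin.coe_toFinset, ?_⟩
  rw [← Set.ncard_eq_toFinset_card S hfin, ← hbij.injOn.ncard_image, hbij.image_eq,
    ← Finset.coe_Ico, Set.ncard_coe_finset, Int.card_Ico, sub_zero]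

/-- The `m`-generators of a bounded, co-bounded `m`-invariant set contain exactly one
element of each residue class mod `m`; in particular there are exactly `m` of them. -/
theorem gens_unique_residues (m : ℤ) (hm : 0 < m) (Δ : Set ℤ)
    (hI : Invariant m Δ) (hb : HasMin Δ) (hc : CoBounded Δ) :
    (∀ r : ℤ, ∃! a : ℤ, a ∈ gens m Δ ∧ a % m = r % m) ∧
    ∃ s : Finset ℤ, (↑s : Set ℤ) = gens m Δ ∧ s.card = m.toNat := by
  obtain ⟨a₀, -, ha₀⟩ := hb
  have hunique : ∀ r : ℤ, ∃! a : ℤ, a ∈ gens m Δ ∧ a % m = r % m := fun r => by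
    obtain ⟨a, ha, har⟩ := exists_mem_gens_modEq hm ⟨a₀, ha₀⟩ hc r
    exact ⟨a, ⟨ha, har⟩, fun b hb => hI.eq_of_mem_gens_of_modEq hm hb.1 ha (hb.2.trans har.symm)⟩
  exact ⟨hunique, exists_finset_of_existsUnique_emod hm hunique⟩
end

section
/- Let Δ be a bounded, co-bounded m-invariant set and w ∈ [m]^n with w · Δ = Δ + n. Write Δ^{(i)} = w_{i-1} ⋯ w_0 · Δ (so Δ^{(0)} = Δ and Δ^{(n)} = Δ + n). Then for every 0 ≤ i ≤ n, the set Δ^{(i)} is an (m,n)-invariant set. -/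
/-!
Removing a `k`-generator from a `k`-invariant set keeps it `k`-invariant. A bounded, co-bounded
set has finitely many `m`-generators and at least one in each residue class mod `m` (the least
element of the class), so a letter `j < m` always removes a genuine generator, and by induction
every `Δ^{(i)}` is a bounded, co-bounded `m`-invariant set. For `n`-invariance, the sets
`Δ^{(i)}` decrease, so `Δ^{(i)} + n ⊆ Δ + n = Δ^{(n)} ⊆ Δ^{(i)}`.
-/

theorem nthSmallest_mem {S : Set ℤ} (hS : S.Finite) {k : ℕ} (hk : k < S.ncard) :
    nthSmallest k S ∈ S := by
  induction k generalizing S with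
  | zero => exact (Set.nonempty_of_ncard_ne_zero (by omega)).csInf_mem hS
  | succ k ih =>
    have hmin : sInf S ∈ S := (Set.nonempty_of_ncard_ne_zero (by omega)).csInf_mem hS
    have hk' : k < (S \ {sInf S}).ncard := by
      rw [Set.ncard_sdiff_singleton_of_mem hmin]; omega
    exact (ih hS.sdiff hk').1

theorem HasMin.mono {Δ S : Set ℤ} (hΔ : HasMin Δ) (hS : S ⊆ Δ) (hne : S.Nonempty) :
    HasMin S := by
  obtain ⟨a, -, ha⟩ := hΔ
  classical
  exact Int.exists_least_of_bdd ⟨a, fun x hx => ha x (hS hx)⟩ hne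

theorem CoBounded.nonempty {Δ : Set ℤ} (hc : CoBounded Δ) : Δ.Nonempty :=
  let ⟨N, hN⟩ := hc; ⟨N, hN N le_rfl⟩

theorem CoBounded.diff_singleton {Δ : Set ℤ} (hc : CoBounded Δ) (g : ℤ) :
    CoBounded (Δ \ {g}) := by
  obtain ⟨N, hN⟩ := hc
  refine ⟨max N (g + 1), fun x hx => ⟨hN x (le_of_max_le_left hx), ?_⟩⟩
  have := le_of_max_le_right hx
  simp only [Set.mem_singleton_iff]
  omega

theorem Invariant.diff_singleton_of_mem_gens {k : ℤ} {Δ : Set ℤ} {g : ℤ}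
    (hI : Invariant k Δ) (hg : g ∈ gens k Δ) : Invariant k (Δ \ {g}) := by
  rintro _ ⟨x, ⟨hx, -⟩, rfl⟩
  exact ⟨hI ⟨x, hx, rfl⟩, fun hxg => hg.2 ⟨x, hx, hxg⟩⟩

theorem invariant_of_shiftSet_subset {k : ℤ} {Γ Δ : Set ℤ} (hΓΔ : Γ ⊆ Δ)
    (hΔΓ : shiftSet Δ k ⊆ Γ) : Invariant k Γ :=
  (Set.image_mono hΓΔ).trans hΔΓ

theorem gens_finite (k : ℤ) {Δ : Set ℤ} (hb : HasMin Δ) (hc : CoBounded Δ) :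
    (gens k Δ).Finite := by
  obtain ⟨a, -, ha⟩ := hb
  obtain ⟨N, hN⟩ := hc
  refine (Set.finite_Ico a (N + k)).subset fun g ⟨hg, hg'⟩ => ⟨ha g hg, ?_⟩
  by_contra! h
  exact hg' ⟨g - k, hN _ (by omega), by ring⟩

theorem exists_mem_gens_intCast_eq {k : ℕ} (hk : 0 < k) {Δ : Set ℤ} (hb : HasMin Δ)
    (hc : CoBounded Δ) (r : ℤ) : ∃ g ∈ gens k Δ, (g : ZMod k) = r := by
  set S := {x ∈ Δ | (x : ZMod k) = r}
  have hne : S.Nonempty := by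
    obtain ⟨N, hN⟩ := hc
    have := Int.emod_nonneg (r - N) (b := k) (by omega)
    refine ⟨N + (r - N) % k, hN _ (by omega), ?_⟩
    push_cast [ZMod.intCast_mod]; ring
  obtain ⟨g, ⟨hgΔ, hgr⟩, hleast⟩ := hb.mono (Set.sep_subset _ _) hne
  refine ⟨g, ⟨hgΔ, ?_⟩, hgr⟩
  rintro ⟨y, hy, rfl⟩
  have hyS : y ∈ S := ⟨hy, by simpa using hgr⟩
  have hgy : y + k ≤ y := hleast y hyS
  omega

theorem le_ncard_gens {k : ℕ} (hk : 0 < k) {Δ : Set ℤ} (hb : HasMin Δ) (hc : CoBounded Δ) :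
    k ≤ (gens k Δ).ncard := by
  have hsurj : ((↑) : ℤ → ZMod k) '' gens k Δ = Set.univ :=
    Set.eq_univ_of_forall fun c => by
      obtain ⟨r, rfl⟩ := ZMod.intCast_surjective c
      exact exists_mem_gens_intCast_eq hk hb hc r
  calc k = (Set.univ : Set (ZMod k)).ncard := by rw [Set.ncard_univ, Nat.card_zmod]
    _ ≤ (gens k Δ).ncard := hsurj ▸ Set.ncard_image_le (gens_finite k hb hc)

theorem nthSmallest_gens_mem {m j : ℕ} (hj : j < m) {Δ : Set ℤ} (hb : HasMin Δ)
    (hc : CoBounded Δ) : nthSmallest j (gens m Δ) ∈ gens m Δ :=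
  nthSmallest_mem (gens_finite m hb hc) (hj.trans_le (le_ncard_gens (by omega) hb hc))

theorem letterAct_invariant_hasMin_coBounded {m j : ℕ} (hj : j < m) {Δ : Set ℤ}
    (hI : Invariant m Δ) (hb : HasMin Δ) (hc : CoBounded Δ) :
    Invariant m (letterAct m j Δ) ∧ HasMin (letterAct m j Δ) ∧ CoBounded (letterAct m j Δ) :=
  have hc' := hc.diff_singleton (nthSmallest j (gens m Δ))
  ⟨hI.diff_singleton_of_mem_gens (nthSmallest_gens_mem hj hb hc),
    hb.mono Set.sdiff_subset hc'.nonempty, hc'⟩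

theorem steps_invariant_hasMin_coBounded {m : ℕ} {Δ : Set ℤ} (hI : Invariant m Δ)
    (hb : HasMin Δ) (hc : CoBounded Δ) {p : ℕ → ℕ} {i : ℕ} (hp : ∀ j < i, p j < m) :
    Invariant m (steps m p Δ i) ∧ HasMin (steps m p Δ i) ∧ CoBounded (steps m p Δ i) := by
  induction i with
  | zero => exact ⟨hI, hb, hc⟩
  | succ i ih =>
    obtain ⟨hI', hb', hc'⟩ := ih fun j hj => hp j (by omega)
    exact letterAct_invariant_hasMin_coBounded (hp i (by omega)) hI' hb' hc'

theorem steps_antitone (m : ℤ) (p : ℕ → ℕ) (Δ : Set ℤ) : Antitone (steps m p Δ) :=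
  antitone_nat_of_succ_le fun _ => Set.sdiff_subset

theorem each_step_invariant_general (m n : ℕ) (Δ : Set ℤ)
    (hI : Invariant m Δ) (hb : HasMin Δ) (hc : CoBounded Δ)
    (p : ℕ → ℕ) (hp : ∀ i < n, p i < m)
    (hact : steps m p Δ n = shiftSet Δ n) :
    ∀ i ≤ n, Invariant m (steps m p Δ i) ∧ Invariant n (steps m p Δ i) := by
  intro i hi
  refine ⟨(steps_invariant_hasMin_coBounded hI hb hc fun j hj => hp j (by omega)).1, ?_⟩
  exact invariant_of_shiftSet_subset (Δ := Δ) (steps_antitone m p Δ (Nat.zero_le i))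
    (hact ▸ steps_antitone m p Δ hi)

/-- If `w ⋅ Δ = Δ + n` then every intermediate set `Δ^{(i)} = w_{i-1} ⋯ w_0 ⋅ Δ`
(for `0 ≤ i ≤ n`) is an `(m,n)`-invariant set. -/
theorem each_step_invariant (m n : ℕ) (hm : 0 < m) (hn : 0 < n) (Δ : Set ℤ)
    (hI : Invariant m Δ) (hb : HasMin Δ) (hc : CoBounded Δ)
    (p : ℕ → ℕ) (hp : ∀ i < n, p i < m)
    (hact : steps m p Δ n = shiftSet Δ n) :
    ∀ i ≤ n, Invariant m (steps m p Δ i) ∧ Invariant n (steps m p Δ i) :=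
  each_step_invariant_general m n Δ hI hb hc p hp hact
end

section
/- For every bounded, co-bounded (m,n)-invariant set Δ there exists a unique monotone word p = p_{n-1} ⋯ p_1 p_0 ∈ [m]^n with p_0 ≤ p_1 ≤ ... ≤ p_{n-1} such that p · Δ = Δ + n under the generator-removal action. -/
/-!
The `n`-generators `g₀ < ⋯ < g_{n-1}` of `Δ` are exactly what separates `Δ` from `Δ + n`, so
a word maps `Δ` to `Δ + n` iff it removes each of them once. Removing an `m`-generator `a`
replaces it by `a + m` and leaves the generators below `a` untouched, so consecutive letters
satisfy `pᵢ ≤ pᵢ₊₁` exactly when the removed elements increase. A monotone word must therefore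
remove the `gᵢ` in increasing order, which determines it. Conversely this order can always be
played: by `m`-invariance, an `n`-generator minus `m` that lies in `Δ` is a smaller
`n`-generator, so `gᵢ` is an `m`-generator once `g₀, …, g_{i-1}` are gone.
-/

open Set

namespace Parking

section Rank

noncomputable def rank (S : Set ℤ) (a : ℤ) : ℕ := (S ∩ Iio a).ncard

variable {S : Set ℤ}

lemma rank_mono (hS : S.Finite) : Monotone (rank S) := fun _ _ hab =>
  ncard_le_ncard (inter_subset_inter_right _ (Iio_subset_Iio hab)) (hS.inter_of_left _)

lemma rank_lt_rank (hS : S.Finite) {a b : ℤ} (ha : a ∈ S) (hab : a < b) :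
    rank S a < rank S b :=
  ncard_lt_ncard ((ssubset_iff_of_subset (inter_subset_inter_right _ (Iio_subset_Iio hab.le))).2
    ⟨a, ⟨ha, hab⟩, fun h => lt_irrefl a h.2⟩) (hS.inter_of_left _)

lemma rank_injOn (hS : S.Finite) : InjOn (rank S) S := fun a ha b hb hab => by
  by_contra hne
  rcases lt_or_gt_of_ne hne with h | h
  · exact (rank_lt_rank hS ha h).ne hab
  · exact (rank_lt_rank hS hb h).ne hab.symm

lemma rank_lt_ncard (hS : S.Finite) {a : ℤ} (ha : a ∈ S) : rank S a < S.ncard :=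
  ncard_lt_ncard
    ((ssubset_iff_of_subset inter_subset_left).2 ⟨a, ha, fun h => lt_irrefl a h.2⟩) hS

lemma rank_eq_rank_diff_singleton_add_one (hS : S.Finite) {a b : ℤ} (ha : a ∈ S) (hab : a < b) :
    rank S b = rank (S \ {a}) b + 1 := by
  rw [rank, rank, ← inter_sdiff_right_comm]
  exact (ncard_sdiff_singleton_add_one (show a ∈ S ∩ Iio b from ⟨ha, hab⟩)
    (hS.inter_of_left _)).symm

lemma nthSmallest_mem_and_rank (hS : S.Finite) {j : ℕ} (hj : j < S.ncard) :
    nthSmallest j S ∈ S ∧ rank S (nthSmallest j S) = j := by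
  have hmin : sInf S ∈ S := Int.csInf_mem (nonempty_of_ncard_ne_zero (by omega)) hS.bddBelow
  induction j generalizing S with
  | zero =>
    refine ⟨hmin, ?_⟩
    rw [nthSmallest, rank, ncard_eq_zero (hS.inter_of_left _), eq_empty_iff_forall_notMem]
    exact fun x hx => not_lt.2 (csInf_le hS.bddBelow hx.1) hx.2
  | succ j ih =>
    have hj' : j < (S \ {sInf S}).ncard := by rw [ncard_sdiff_singleton_of_mem hmin]; omega
    obtain ⟨⟨hb, hne⟩, hrank⟩ := ih hS.sdiff hj'
      (Int.csInf_mem (nonempty_of_ncard_ne_zero (by omega)) (hS.sdiff).bddBelow)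
    refine ⟨hb, ?_⟩
    rw [nthSmallest, rank_eq_rank_diff_singleton_add_one hS hmin
      ((csInf_le hS.bddBelow hb).lt_of_ne (Ne.symm hne)), hrank]

lemma nthSmallest_rank (hS : S.Finite) {a : ℤ} (ha : a ∈ S) : nthSmallest (rank S a) S = a :=
  have h := nthSmallest_mem_and_rank hS (rank_lt_ncard hS ha)
  rank_injOn hS h.1 ha h.2

lemma nthSmallest_strictMonoOn (hS : S.Finite) :
    StrictMonoOn (nthSmallest · S) (Iio S.ncard) := fun i hi j hj hij => by
  refine (rank_mono hS).reflect_lt ?_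
  rwa [(nthSmallest_mem_and_rank hS hi).2, (nthSmallest_mem_and_rank hS hj).2]

lemma image_nthSmallest (hS : S.Finite) : (nthSmallest · S) '' Iio S.ncard = S :=
  (image_subset_iff.2 fun _ hi => (nthSmallest_mem_and_rank hS hi).1).antisymm
    fun a ha => ⟨rank S a, rank_lt_ncard hS ha, nthSmallest_rank hS ha⟩

lemma _root_.StrictMonoOn.image_Iio_eq_inter_Iio {r : ℕ → ℤ} {N i : ℕ}
    (hr : StrictMonoOn r (Iio N)) (hi : i < N) : r '' Iio i = r '' Iio N ∩ Iio (r i) := by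
  ext x
  constructor
  · rintro ⟨k, hk, rfl⟩
    exact ⟨⟨k, lt_trans hk hi, rfl⟩, hr (lt_trans hk hi) hi hk⟩
  · rintro ⟨⟨k, hk, rfl⟩, hlt⟩
    exact ⟨k, (hr.lt_iff_lt hk hi).1 hlt, rfl⟩

lemma _root_.StrictMonoOn.eq_nthSmallest {r : ℕ → ℤ} {N : ℕ} (hr : StrictMonoOn r (Iio N))
    {i : ℕ} (hi : i < N) : r i = nthSmallest i (r '' Iio N) := by
  have hS : (r '' Iio N).Finite := (finite_Iio N).image r
  have hrank : rank (r '' Iio N) (r i) = i := by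
    rw [rank, ← hr.image_Iio_eq_inter_Iio hi, (hr.injOn.mono (Iio_subset_Iio hi.le)).ncard_image,
      ncard_Iio_nat]
  have h := nthSmallest_rank hS (mem_image_of_mem r (show i ∈ Iio N from hi))
  rw [hrank] at h
  exact h.symm

lemma forall_eq_nthSmallest_iff (hS : S.Finite) {N : ℕ} (hN : S.ncard = N) {r : ℕ → ℤ} :
    (∀ i < N, r i = nthSmallest i S) ↔
      (∀ i, i + 1 < N → r i < r (i + 1)) ∧ r '' Iio N = S := by
  subst hN
  constructor
  · intro h
    refine ⟨fun i hi => ?_, ?_⟩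
    · rw [h i (by omega), h (i + 1) hi]
      exact nthSmallest_strictMonoOn hS (show i < S.ncard by omega) hi (Nat.lt_succ_self i)
    · rw [image_congr (s := Iio S.ncard) fun i hi => h i hi, image_nthSmallest hS]
  · rintro ⟨hsucc, himage⟩ i hi
    rw [(strictMonoOn_of_lt_add_one ordConnected_Iio fun a _ _ ha => hsucc a ha).eq_nthSmallest hi,
      himage]

end Rank

section Generators

variable {k : ℤ} {Δ : Set ℤ}

lemma mem_shiftSet {x : ℤ} : x ∈ shiftSet Δ k ↔ x - k ∈ Δ :=
  ⟨by rintro ⟨y, hy, rfl⟩; simpa, fun h => ⟨x - k, h, sub_add_cancel x k⟩⟩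

lemma invariant_iff : Invariant k Δ ↔ ∀ x ∈ Δ, x + k ∈ Δ :=
  ⟨fun h x hx => h ⟨x, hx, rfl⟩, by rintro h _ ⟨x, hx, rfl⟩; exact h x hx⟩

lemma mem_gens {x : ℤ} : x ∈ gens k Δ ↔ x ∈ Δ ∧ x - k ∉ Δ := by
  rw [gens, mem_sdiff, mem_shiftSet]

lemma gens_subset : gens k Δ ⊆ Δ := sdiff_subset

lemma shiftSet_eq_diff_gens (h : Invariant k Δ) : shiftSet Δ k = Δ \ gens k Δ := by
  ext x
  rw [mem_sdiff, mem_gens, mem_shiftSet, not_and_not_right]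
  exact ⟨fun hx => ⟨by simpa using invariant_iff.1 h _ hx, fun _ => hx⟩,
    fun hx => hx.2 hx.1⟩

lemma _root_.Invariant.add_mul_mem_s8 (h : Invariant k Δ) {x : ℤ} (hx : x ∈ Δ) {t : ℤ}
    (ht : 0 ≤ t) :
    x + k * t ∈ Δ := by
  induction t, ht using Int.leInduction with
  | base => simpa
  | succ t _ ih => simpa [mul_add, ← add_assoc] using invariant_iff.1 h _ ih

lemma _root_.CoBounded.diff_finite (hc : CoBounded Δ) {s : Set ℤ} (hs : s.Finite) :
    CoBounded (Δ \ s) := by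
  obtain ⟨N, hN⟩ := hc
  obtain ⟨M, hM⟩ := hs.bddAbove
  exact ⟨max N (M + 1), fun x hx => ⟨hN x (le_of_max_le_left hx),
    fun hxs => by have := hM hxs; have := le_of_max_le_right hx; omega⟩⟩

lemma _root_.HasMin.bddBelow (h : HasMin Δ) : BddBelow Δ :=
  let ⟨a, _, ha⟩ := h; ⟨a, ha⟩

structure IsBoundedInvariant (k : ℤ) (Δ : Set ℤ) : Prop where
  invariant : Invariant k Δ
  bddBelow : BddBelow Δ
  coBounded : CoBounded Δ

/-- The larger of two congruent generators, minus `k`, would still lie in `Δ`. -/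
lemma injOn_emod_gens (hk : 0 < k) (h : Invariant k Δ) : InjOn (· % k) (gens k Δ) := by
  suffices ∀ x ∈ gens k Δ, ∀ y ∈ gens k Δ, x % k = y % k → x ≤ y → x = y from
    fun x hx y hy hxy => (le_total x y).elim (this x hx y hy hxy)
      fun hyx => (this y hy x hx hxy.symm hyx).symm
  intro x hx y hy hxy hle
  obtain ⟨t, ht⟩ : k ∣ y - x := Int.ModEq.dvd hxy
  by_contra hne
  have ht1 : 1 ≤ t := by
    by_contra! ht1; nlinarith [lt_of_le_of_ne hle hne]
  exact (mem_gens.1 hy).2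
    (by convert h.add_mul_mem_s8 (mem_gens.1 hx).1 (sub_nonneg.2 ht1) using 1; linear_combination ht)

/-- The least element of `Δ` in a residue class mod `k` is a `k`-generator. -/
lemma image_emod_gens (hk : 0 < k) (h : IsBoundedInvariant k Δ) :
    (· % k) '' gens k Δ = Ico 0 k := by
  refine subset_antisymm ?_ ?_
  · rintro _ ⟨x, -, rfl⟩
    exact ⟨Int.emod_nonneg x hk.ne', Int.emod_lt_of_pos x hk⟩
  rintro r ⟨hr0, hrk⟩
  set C := {x ∈ Δ | x % k = r}
  have hCne : C.Nonempty := by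
    obtain ⟨N, hN⟩ := h.coBounded
    refine ⟨r + k * |N|, hN _ (by nlinarith [abs_nonneg N, le_abs_self N]), ?_⟩
    rw [Int.add_mul_emod_self_left, Int.emod_eq_of_lt hr0 hrk]
  have hμ : sInf C ∈ C := Int.csInf_mem hCne (h.bddBelow.mono (sep_subset _ _))
  refine ⟨sInf C, mem_gens.2 ⟨hμ.1, fun hsub => ?_⟩, hμ.2⟩
  have : sInf C ≤ sInf C - k :=
    csInf_le (h.bddBelow.mono (sep_subset _ _)) ⟨hsub, by rw [Int.sub_emod_right, hμ.2]⟩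
  omega

lemma IsBoundedInvariant.finite_gens {k : ℕ} (h : IsBoundedInvariant k Δ) (hk : 0 < k) :
    (gens k Δ).Finite :=
  Finite.of_finite_image (by rw [image_emod_gens (by omega) h]; exact finite_Ico _ _)
    (injOn_emod_gens (by omega) h.invariant)

lemma IsBoundedInvariant.ncard_gens {k : ℕ} (h : IsBoundedInvariant k Δ) (hk : 0 < k) :
    (gens k Δ).ncard = k := by
  rw [← (injOn_emod_gens (by omega) h.invariant).ncard_image, image_emod_gens (by omega) h,
    ← Finset.coe_Ico, ncard_coe_finset, Int.card_Ico]
  simp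

lemma invariant_diff_singleton (h : Invariant k Δ) {a : ℤ} (ha : a ∈ gens k Δ) :
    Invariant k (Δ \ {a}) := by
  refine invariant_iff.2 fun x hx => ⟨invariant_iff.1 h x hx.1, fun hxa => (mem_gens.1 ha).2 ?_⟩
  rw [← eq_of_mem_singleton hxa, add_sub_cancel_right]
  exact hx.1

lemma IsBoundedInvariant.diff_singleton (h : IsBoundedInvariant k Δ) {a : ℤ}
    (ha : a ∈ gens k Δ) : IsBoundedInvariant k (Δ \ {a}) :=
  ⟨invariant_diff_singleton h.invariant ha, h.bddBelow.mono sdiff_subset,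
    h.coBounded.diff_finite (finite_singleton a)⟩

lemma gens_diff_singleton (hk : 0 < k) (h : Invariant k Δ) {a : ℤ} (ha : a ∈ gens k Δ) :
    gens k (Δ \ {a}) = insert (a + k) (gens k Δ \ {a}) := by
  have hak : a + k ∈ Δ := invariant_iff.1 h a (mem_gens.1 ha).1
  ext x
  simp only [mem_gens, mem_sdiff, mem_singleton_iff, mem_insert_iff, not_and_not_right]
  constructor
  · rintro ⟨⟨hx, hxa⟩, hsub⟩
    by_cases hxk : x - k = a
    · exact Or.inl (by omega)
    · exact Or.inr ⟨⟨hx, fun h => hxk (hsub h)⟩, hxa⟩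
  · rintro (rfl | ⟨⟨hx, hsub⟩, hxa⟩)
    · exact ⟨⟨hak, by omega⟩, fun _ => by ring⟩
    · exact ⟨⟨hx, hxa⟩, fun h => absurd h hsub⟩

/-- Removing `a` changes the generators only at `a` and `a + k`. -/
lemma rank_le_rank_gens_diff_singleton_iff (hk : 0 < k) (h : Invariant k Δ)
    (hfin : (gens k Δ).Finite) {a b : ℤ} (ha : a ∈ gens k Δ) (hb : b ∈ gens k (Δ \ {a})) :
    rank (gens k Δ) a ≤ rank (gens k (Δ \ {a})) b ↔ a < b := by
  have hswap := gens_diff_singleton hk h ha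
  have hfin' : (gens k (Δ \ {a})).Finite := by rw [hswap]; exact hfin.sdiff.insert _
  constructor
  · intro hle
    by_contra! hba
    have hlt : b < a := lt_of_le_of_ne hba fun hab => (mem_gens.1 hb).1.2 hab
    have hbT : b ∈ gens k Δ := by
      rw [hswap] at hb
      rcases hb with hb | hb
      · omega
      · exact hb.1
    have hrank : rank (gens k (Δ \ {a})) b = rank (gens k Δ) b := by
      rw [rank, rank, hswap]
      congr 1
      ext x
      simp only [mem_inter_iff, mem_insert_iff, mem_sdiff, mem_singleton_iff, mem_Iio]
      constructor
      · rintro ⟨hx | hx, hxb⟩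
        · omega
        · exact ⟨hx.1, hxb⟩
      · rintro ⟨hx, hxb⟩
        exact ⟨Or.inr ⟨hx, by omega⟩, hxb⟩
    have := rank_lt_rank hfin hbT hlt
    omega
  · intro hlt
    refine ncard_le_ncard (fun x hx => ⟨?_, lt_trans hx.2 hlt⟩) (hfin'.inter_of_left _)
    rw [hswap]
    exact Or.inr ⟨hx.1, ne_of_lt hx.2⟩

end Generators

section TwoGenerators

variable {m n : ℤ} {Δ : Set ℤ}

lemma sub_mem_gens_of_mem_gens (hm : Invariant m Δ) {x : ℤ} (hx : x ∈ gens n Δ)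
    (hxm : x - m ∈ Δ) : x - m ∈ gens n Δ :=
  mem_gens.2 ⟨hxm, fun h => (mem_gens.1 hx).2
    (by simpa [sub_right_comm x m n] using invariant_iff.1 hm _ h)⟩

lemma invariant_diff_gens_inter_Iio (hm0 : 0 < m) (hm : Invariant m Δ) (c : ℤ) :
    Invariant m (Δ \ (gens n Δ ∩ Iio c)) := by
  refine invariant_iff.2 fun x hx => ⟨invariant_iff.1 hm x hx.1, fun hxc => hx.2 ⟨?_, ?_⟩⟩
  · simpa using sub_mem_gens_of_mem_gens hm hxc.1 (by simpa using hx.1)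
  · exact lt_trans (lt_add_of_pos_right x hm0) hxc.2

lemma mem_gens_diff_gens_inter_Iio (hm0 : 0 < m) (hm : Invariant m Δ) {a : ℤ}
    (ha : a ∈ gens n Δ) : a ∈ gens m (Δ \ (gens n Δ ∩ Iio a)) :=
  mem_gens.2 ⟨⟨(mem_gens.1 ha).1, fun h => lt_irrefl a h.2⟩,
    fun h => h.2 ⟨sub_mem_gens_of_mem_gens hm ha h.1, by simpa using hm0⟩⟩

end TwoGenerators

section Action

noncomputable def removed (m : ℤ) (w : ℕ → ℕ) (Δ : Set ℤ) (i : ℕ) : ℤ :=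
  nthSmallest (w i) (gens m (steps m w Δ i))

lemma steps_succ (m : ℤ) (w : ℕ → ℕ) (Δ : Set ℤ) (i : ℕ) :
    steps m w Δ (i + 1) = steps m w Δ i \ {removed m w Δ i} := rfl

lemma image_Iio_add_one {α : Type*} (f : ℕ → α) (i : ℕ) :
    f '' Iio (i + 1) = insert (f i) (f '' Iio i) := by
  rw [Iio_add_one_eq_Iic, ← Iio_insert, image_insert_eq]

lemma steps_eq_diff_image (m : ℤ) (w : ℕ → ℕ) (Δ : Set ℤ) (i : ℕ) :
    steps m w Δ i = Δ \ removed m w Δ '' Iio i := by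
  induction i with
  | zero => simp [steps]
  | succ i ih => rw [steps_succ, ih, image_Iio_add_one, sdiff_sdiff, union_singleton]

lemma removed_eq_of_forall_rank {k : ℤ} {w : ℕ → ℕ} {Δ : Set ℤ} {r : ℕ → ℤ} {n : ℕ}
    (hfin : ∀ i < n, (gens k (Δ \ r '' Iio i)).Finite)
    (hr : ∀ i < n, r i ∈ gens k (Δ \ r '' Iio i))
    (hw : ∀ i < n, w i = rank (gens k (Δ \ r '' Iio i)) (r i)) :
    ∀ i < n, removed k w Δ i = r i := by
  intro i
  induction i using Nat.strong_induction_on with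
  | _ i ih =>
    intro hi
    have hsteps : steps k w Δ i = Δ \ r '' Iio i := by
      rw [steps_eq_diff_image, image_congr (s := Iio i) fun j hj => ih j hj (lt_trans hj hi)]
    rw [removed, hsteps, hw i hi, nthSmallest_rank (hfin i hi) (hr i hi)]

variable {m : ℕ} {w : ℕ → ℕ} {Δ : Set ℤ}

lemma removed_mem_gens_and_rank (hm : 0 < m) {i : ℕ} (h : IsBoundedInvariant m (steps m w Δ i))
    (hw : w i < m) :
    removed m w Δ i ∈ gens m (steps m w Δ i) ∧
      rank (gens m (steps m w Δ i)) (removed m w Δ i) = w i :=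
  nthSmallest_mem_and_rank (h.finite_gens hm) (by rw [h.ncard_gens hm]; exact hw)

lemma isBoundedInvariant_steps (hm : 0 < m) (hΔ : IsBoundedInvariant m Δ) (hw : ∀ i, w i < m)
    (i : ℕ) : IsBoundedInvariant m (steps m w Δ i) := by
  induction i with
  | zero => exact hΔ
  | succ i ih => exact ih.diff_singleton (removed_mem_gens_and_rank hm ih (hw i)).1

lemma removed_mem (hm : 0 < m) (hΔ : IsBoundedInvariant m Δ) (hw : ∀ i, w i < m) (i : ℕ) :
    removed m w Δ i ∈ Δ := by
  have h := gens_subset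
    (removed_mem_gens_and_rank hm (isBoundedInvariant_steps hm hΔ hw i) (hw i)).1
  rw [steps_eq_diff_image] at h
  exact h.1

lemma rank_removed (hm : 0 < m) (hΔ : IsBoundedInvariant m Δ) (hw : ∀ i, w i < m) (i : ℕ) :
    rank (gens m (Δ \ removed m w Δ '' Iio i)) (removed m w Δ i) = w i := by
  rw [← steps_eq_diff_image]
  exact (removed_mem_gens_and_rank hm (isBoundedInvariant_steps hm hΔ hw i) (hw i)).2

lemma le_succ_iff_removed_lt (hm : 0 < m) (hΔ : IsBoundedInvariant m Δ) (hw : ∀ i, w i < m)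
    (i : ℕ) : w i ≤ w (i + 1) ↔ removed m w Δ i < removed m w Δ (i + 1) := by
  have hi := isBoundedInvariant_steps hm hΔ hw i
  obtain ⟨hr, hrank⟩ := removed_mem_gens_and_rank hm hi (hw i)
  obtain ⟨hr', hrank'⟩ :=
    removed_mem_gens_and_rank hm (isBoundedInvariant_steps hm hΔ hw (i + 1)) (hw (i + 1))
  rw [steps_succ] at hr' hrank'
  rw [← hrank, ← hrank']
  exact rank_le_rank_gens_diff_singleton_iff (by omega) hi.invariant (hi.finite_gens hm) hr hr'

lemma forall_eq_of_forall_removed_eq {w' : ℕ → ℕ} (hm : 0 < m) (hΔ : IsBoundedInvariant m Δ)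
    (hw : ∀ i, w i < m) (hw' : ∀ i, w' i < m) {n : ℕ}
    (h : ∀ i < n, removed m w Δ i = removed m w' Δ i) : ∀ i < n, w i = w' i := by
  intro i hi
  rw [← rank_removed hm hΔ hw, ← rank_removed hm hΔ hw',
    image_congr (s := Iio i) fun j hj => h j (lt_trans hj hi), h i hi]

lemma steps_eq_shiftSet_iff (hm : 0 < m) (hΔ : IsBoundedInvariant m Δ) (hw : ∀ i, w i < m)
    {n : ℕ} (hn : Invariant n Δ) :
    steps m w Δ n = shiftSet Δ n ↔ removed m w Δ '' Iio n = gens n Δ := by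
  have hsub : removed m w Δ '' Iio n ⊆ Δ :=
    image_subset_iff.2 fun i _ => removed_mem hm hΔ hw i
  rw [steps_eq_diff_image, shiftSet_eq_diff_gens hn]
  refine ⟨fun h => ?_, fun h => by rw [h]⟩
  rw [← sdiff_sdiff_cancel_left hsub, h, sdiff_sdiff_cancel_left gens_subset]

end Action

section Words

variable {n m : ℕ}

def extendWord (p : Fin n → Fin m) (i : ℕ) : ℕ := if h : i < n then p ⟨i, h⟩ else 0

lemma extendWord_of_lt (p : Fin n → Fin m) {i : ℕ} (hi : i < n) :
    extendWord p i = p ⟨i, hi⟩ :=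
  dif_pos hi

lemma extendWord_lt (hm : 0 < m) (p : Fin n → Fin m) (i : ℕ) : extendWord p i < m := by
  unfold extendWord
  split_ifs
  exacts [Fin.is_lt _, hm]

lemma monotone_iff_extendWord_le_succ (p : Fin n → Fin m) :
    Monotone p ↔ ∀ i, i + 1 < n → extendWord p i ≤ extendWord p (i + 1) := by
  constructor
  · intro hp i hi
    rw [extendWord_of_lt p (by omega), extendWord_of_lt p hi]
    exact hp (Fin.mk_le_mk.2 (Nat.le_succ i))
  · intro h a b hab
    have hmono : MonotoneOn (extendWord p) (Iio n) :=
      monotoneOn_of_le_add_one ordConnected_Iio fun i _ _ hi => h i hi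
    have := hmono a.2 b.2 hab
    rwa [extendWord_of_lt p a.2, extendWord_of_lt p b.2] at this

lemma eq_of_forall_extendWord_eq {p q : Fin n → Fin m}
    (h : ∀ i < n, extendWord p i = extendWord q i) : p = q :=
  funext fun i => Fin.ext (by simpa [extendWord_of_lt _ i.2] using h i i.2)

end Words

section MonotoneWords

variable {m n : ℕ} {Δ : Set ℤ}

lemma monotone_iff_removed_lt_succ (hm : 0 < m) (hΔ : IsBoundedInvariant m Δ)
    (p : Fin n → Fin m) :
    Monotone p ↔
      ∀ i, i + 1 < n → removed m (extendWord p) Δ i < removed m (extendWord p) Δ (i + 1) := by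
  rw [monotone_iff_extendWord_le_succ]
  exact forall_congr' fun i => imp_congr_right fun _ =>
    le_succ_iff_removed_lt hm hΔ (extendWord_lt hm p) i

lemma exists_word_removed_eq_nthSmallest (hm : 0 < m) (hΔ : IsBoundedInvariant m Δ)
    (hfin : (gens n Δ).Finite) (hcard : (gens n Δ).ncard = n) :
    ∃ p : Fin n → Fin m,
      ∀ i < n, removed m (extendWord p) Δ i = nthSmallest i (gens n Δ) := by
  set g : ℕ → ℤ := (nthSmallest · (gens n Δ))
  have hg : StrictMonoOn g (Iio n) := hcard ▸ nthSmallest_strictMonoOn hfin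
  have himage : g '' Iio n = gens n Δ := by
    rw [← image_nthSmallest hfin, hcard]
  have hD : ∀ i < n, Δ \ g '' Iio i = Δ \ (gens n Δ ∩ Iio (g i)) := fun i hi => by
    rw [hg.image_Iio_eq_inter_Iio hi, himage]
  have hDinv : ∀ i < n, IsBoundedInvariant m (Δ \ g '' Iio i) := fun i hi =>
    ⟨hD i hi ▸ invariant_diff_gens_inter_Iio (by omega) hΔ.invariant _,
      hΔ.bddBelow.mono sdiff_subset, hΔ.coBounded.diff_finite ((finite_Iio i).image g)⟩
  have hgen : ∀ i < n, g i ∈ gens m (Δ \ g '' Iio i) := fun i hi =>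
    hD i hi ▸ mem_gens_diff_gens_inter_Iio (by omega) hΔ.invariant
      (himage ▸ mem_image_of_mem g (show i ∈ Iio n from hi))
  refine ⟨fun j => ⟨rank (gens m (Δ \ g '' Iio j)) (g j), ?_⟩,
    removed_eq_of_forall_rank (fun i hi => (hDinv i hi).finite_gens hm) hgen
      fun i hi => extendWord_of_lt _ hi⟩
  exact (rank_lt_ncard ((hDinv j j.2).finite_gens hm) (hgen j j.2)).trans_eq
    ((hDinv j j.2).ncard_gens hm)

end MonotoneWords

end Parking

open Parking in
/-- Every bounded, co-bounded `(m,n)`-invariant set is shifted by `n` by a unique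
monotone word `p = p_{n-1} ⋯ p_1 p_0 ∈ [m]^n` (with `p_0 ≤ p_1 ≤ … ≤ p_{n-1}`)
under the generator-removal action. -/
theorem exists_unique_monotone_parking (m n : ℕ) (hm : 0 < m) (hn : 0 < n) (Δ : Set ℤ)
    (hIm : Invariant m Δ) (hIn : Invariant n Δ) (hb : HasMin Δ) (hc : CoBounded Δ) :
    ∃! p : Fin n → Fin m, Monotone p ∧
      steps m (fun i => if h : i < n then (p ⟨i, h⟩ : ℕ) else 0) Δ n = shiftSet Δ n := by
  change ∃! p : Fin n → Fin m, Monotone p ∧ steps m (extendWord p) Δ n = shiftSet Δ n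
  have hΔm : IsBoundedInvariant m Δ := ⟨hIm, hb.bddBelow, hc⟩
  have hΔn : IsBoundedInvariant n Δ := ⟨hIn, hb.bddBelow, hc⟩
  have hvalid : ∀ p : Fin n → Fin m,
      Monotone p ∧ steps m (extendWord p) Δ n = shiftSet Δ n ↔
        ∀ i < n, removed m (extendWord p) Δ i = nthSmallest i (gens n Δ) := fun p => by
    rw [monotone_iff_removed_lt_succ hm hΔm,
      steps_eq_shiftSet_iff hm hΔm (extendWord_lt hm p) hIn,
      forall_eq_nthSmallest_iff (hΔn.finite_gens hn) (hΔn.ncard_gens hn)]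
  obtain ⟨p, hp⟩ :=
    exists_word_removed_eq_nthSmallest hm hΔm (hΔn.finite_gens hn) (hΔn.ncard_gens hn)
  refine ⟨p, (hvalid p).2 hp, fun q hq => eq_of_forall_extendWord_eq ?_⟩
  exact forall_eq_of_forall_removed_eq hm hΔm (extendWord_lt hm q) (extendWord_lt hm p)
    fun i hi => ((hvalid q).1 hq i hi).trans (hp i hi).symm
end

section
/- Let u, v ∈ ℝ^m be sorted vectors with all coordinates distinct (interiors of alcoves). For i ∈ [m], let σ_{i,u} be the permutation sorting the shifted vector i⋆u = (u_0 − 1, ..., u_i + m − 1, ..., u_{m-1} − 1). Then ‖i·u − i·v‖ = ‖u − v‖ if and only if σ_{i,u} = σ_{i,v}. -/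
/-- The shift during the action of letter `i` on `ℝ^m`: add `m` to coordinate `i`
and subtract `1` from every coordinate. -/
def shiftVec (m : ℕ) (i : Fin m) (x : Fin m → ℝ) : Fin m → ℝ :=
  fun j => x j - 1 + if j = i then (m : ℝ) else 0

/-- Sort the coordinates of a vector into weakly increasing order. -/
noncomputable def sortVec {m : ℕ} (x : Fin m → ℝ) : Fin m → ℝ := x ∘ Tuple.sort x

/-- The action of the letter `i ∈ [m]` on `V^m`: shift, then re-sort. -/
noncomputable def letterV (m : ℕ) (i : Fin m) (x : Fin m → ℝ) : Fin m → ℝ :=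
  sortVec (shiftVec m i x)

/-- `stepsV m p x i = p_{i-1} ⋯ p_1 p_0 ⋅ x`: the word acts letter by letter, the
letter `p 0` (rightmost) acting first. -/
noncomputable def stepsV (m : ℕ) (p : ℕ → Fin m) (x : Fin m → ℝ) : ℕ → (Fin m → ℝ)
  | 0 => x
  | k+1 => letterV m (p k) (stepsV m p x k)

/-- Membership in the Weyl chamber `V^m`: coordinates sum to `0` and are weakly
increasing. -/
def InV (m : ℕ) (x : Fin m → ℝ) : Prop := (∑ j, x j) = 0 ∧ Monotone x

/-- The Euclidean norm on `ℝ^m`. -/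
noncomputable def eNorm {m : ℕ} (x : Fin m → ℝ) : ℝ := Real.sqrt (∑ j, (x j) ^ 2)

/-!
Since `i ⋆ u - i ⋆ v = u - v`, and sorting a vector does not change its norm, the
statement is the equality case of the rearrangement inequality
`⟪a, b⟫ ≤ ⟪sort a, sort b⟫` for `a = i ⋆ u`, `b = i ⋆ v`: equality holds iff `a` and `b`
monovary. The alcove condition makes the entries of `a` and of `b` distinct, and for such
vectors monovarying means being sorted by the same permutation.
-/

theorem monovary_comp_perm_iff {ι α β : Type*} [Preorder α] [Preorder β] {f : ι → α}
    {g : ι → β} (σ : Equiv.Perm ι) : Monovary (f ∘ σ) (g ∘ σ) ↔ Monovary f g := by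
  refine ⟨fun h => ?_, fun h => h.comp_right σ⟩
  simpa [Function.comp_def] using h.comp_right σ.symm

namespace Tuple

variable {n : ℕ} {α β : Type*} [LinearOrder α] [LinearOrder β]

theorem monovary_of_sort_eq_sort {a : Fin n → α} {b : Fin n → β} (h : sort a = sort b) :
    Monovary a b := by
  rw [← monovary_comp_perm_iff (sort a)]
  exact (monotone_sort a).monovary (h ▸ monotone_sort b)

theorem sort_eq_sort_of_monovary {a : Fin n → α} {b : Fin n → β} (ha : Function.Injective a)
    (hb : Function.Injective b) (h : Monovary a b) : sort a = sort b := by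
  have ha' : StrictMono (a ∘ sort a) :=
    (monotone_sort a).strictMono_of_injective (ha.comp (sort a).injective)
  refine eq_sort_iff.2 ⟨ha'.trans_monovary (h.symm.comp_right (sort a)), ?_⟩
  intro j k hjk hb'
  exact absurd ((sort a).injective (hb hb')) hjk.ne

theorem sort_eq_sort_iff_monovary {a : Fin n → α} {b : Fin n → β} (ha : Function.Injective a)
    (hb : Function.Injective b) : sort a = sort b ↔ Monovary a b :=
  ⟨monovary_of_sort_eq_sort, sort_eq_sort_of_monovary ha hb⟩

end Tuple

theorem sum_sq_sub_sortVec_eq_iff {m : ℕ} (a b : Fin m → ℝ) :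
    ∑ j, (sortVec a j - sortVec b j) ^ 2 = ∑ j, (a j - b j) ^ 2 ↔ Monovary a b := by
  set σ := Tuple.sort a
  set τ := Tuple.sort b
  set ρ : Equiv.Perm (Fin m) := σ.trans τ.symm
  have hsorted : Monovary (sortVec a) (sortVec b) :=
    (Tuple.monotone_sort a).monovary (Tuple.monotone_sort b)
  -- `ρ` realigns the sorted `b` with the sorted `a`, turning `∑ a b` into a rearranged sum
  have hρ : sortVec b ∘ ρ = b ∘ σ := by ext j; simp [sortVec, ρ, σ, τ]
  have hcross : ∑ j, a j * b j = ∑ j, sortVec a j * sortVec b (ρ j) := by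
    rw [← Equiv.sum_comp σ]
    simp [sortVec, ρ, σ, τ]
  have hsq_a : ∑ j, sortVec a j ^ 2 = ∑ j, a j ^ 2 := Equiv.sum_comp σ (a · ^ 2)
  have hsq_b : ∑ j, sortVec b j ^ 2 = ∑ j, b j ^ 2 := Equiv.sum_comp τ (b · ^ 2)
  rw [← monovary_comp_perm_iff σ, ← hρ]
  change _ ↔ Monovary (sortVec a) (sortVec b ∘ ρ)
  rw [← hsorted.sum_mul_comp_perm_eq_sum_mul_iff, ← hcross]
  simp only [sub_sq, Finset.sum_add_distrib, Finset.sum_sub_distrib, mul_assoc,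
    ← Finset.mul_sum, hsq_a, hsq_b]
  constructor <;> intro h <;> linarith

theorem shiftVec_sub_shiftVec {m : ℕ} (i : Fin m) (x y : Fin m → ℝ) (j : Fin m) :
    shiftVec m i x j - shiftVec m i y j = x j - y j := by
  simp only [shiftVec]
  ring

theorem shiftVec_injective {m : ℕ} (i : Fin m) (x : Fin m → ℝ)
    (hx : ∀ j k : Fin m, j ≠ k → ∀ t : ℤ, x j - x k ≠ (m : ℝ) * t) :
    Function.Injective (shiftVec m i x) := by
  intro j k h
  by_contra hjk
  -- the shift moves `x j - x k` by `-m`, `0` or `m`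
  rcases eq_or_ne j i with hj | hj <;> rcases eq_or_ne k i with hk | hk
  · exact hjk (hj.trans hk.symm)
  · simp only [shiftVec, if_pos hj, if_neg hk] at h
    exact hx j k hjk (-1) (by push_cast; linarith)
  · simp only [shiftVec, if_neg hj, if_pos hk] at h
    exact hx j k hjk 1 (by push_cast; linarith)
  · simp only [shiftVec, if_neg hj, if_neg hk] at h
    exact hx j k hjk 0 (by push_cast; linarith)

theorem eNorm_sortVec_sub_sortVec_eq_iff {m : ℕ} (a b : Fin m → ℝ) :
    eNorm (fun j => sortVec a j - sortVec b j) = eNorm (fun j => a j - b j) ↔ Monovary a b := by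
  rw [eNorm, eNorm, Real.sqrt_inj (by positivity) (by positivity)]
  exact sum_sq_sub_sortVec_eq_iff a b

theorem norm_eq_iff_same_sorting_general (m : ℕ) (i : Fin m)
    (u v : Fin m → ℝ)
    (hualc : ∀ j k : Fin m, j ≠ k → ∀ t : ℤ, u j - u k ≠ (m : ℝ) * t)
    (hvalc : ∀ j k : Fin m, j ≠ k → ∀ t : ℤ, v j - v k ≠ (m : ℝ) * t) :
    eNorm (fun j => letterV m i u j - letterV m i v j) =
        eNorm (fun j => u j - v j) ↔
      Tuple.sort (shiftVec m i u) = Tuple.sort (shiftVec m i v) := by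
  have hsub : (fun j => u j - v j) = fun j => shiftVec m i u j - shiftVec m i v j :=
    funext fun j => (shiftVec_sub_shiftVec i u v j).symm
  rw [hsub, Tuple.sort_eq_sort_iff_monovary (shiftVec_injective i u hualc)
    (shiftVec_injective i v hvalc)]
  exact eNorm_sortVec_sub_sortVec_eq_iff _ _

/-- For sorted vectors `u, v` in the interior of alcoves (no two coordinates
congruent mod `m`), the letter `i` preserves the Euclidean distance if and only
if the shifted vectors `i ⋆ u` and `i ⋆ v` are sorted by the same permutation. -/
theorem norm_eq_iff_same_sorting (m : ℕ) (hm : 0 < m) (i : Fin m)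
    (u v : Fin m → ℝ) (hu : InV m u) (hv : InV m v)
    (hualc : ∀ j k : Fin m, j ≠ k → ∀ t : ℤ, u j - u k ≠ (m : ℝ) * t)
    (hvalc : ∀ j k : Fin m, j ≠ k → ∀ t : ℤ, v j - v k ≠ (m : ℝ) * t) :
    eNorm (fun j => letterV m i u j - letterV m i v j) =
        eNorm (fun j => u j - v j) ↔
      Tuple.sort (shiftVec m i u) = Tuple.sort (shiftVec m i v) :=
  norm_eq_iff_same_sorting_general m i u v hualc hvalc
end
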